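/- arXiv:1909.04980 — 4 statements merged into one kernel-verified Lean document; each statement's English description precedes it below -/
import Mathlib

section
/- Let n be divisible by r with n ≥ r²(r+1)/2, and write n = rk. Then there exist distinct positive integers l_1 < l_2 < ... < l_r with l_1 + ... + l_r = k, and for any such choice, the complete r²-partite graph with r parts of size l_i for each i contains no singular copy of K_{r+1}. -/
/-!
A vertex of a complete multipartite graph has degree `n` minus the size of its part. With the
sizes `l i` distinct, two vertices of `completeMultipartiteR r l` therefore have equal degree
exactly when their parts `(i, j)` share the row `i`. The vertices of a clique lie in distinct
parts: if their degrees are all equal they lie in one row, which has only `r` parts, and if the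
degrees are pairwise distinct they lie in distinct rows, of which there are only `r`. Either way
the clique has at most `r` vertices. The sizes `1, 2, …, r - 1, r + (k - r(r + 1)/2)` show that
admissible `l` exist.
-/

open SimpleGraph Set Function

/-- The degree of a vertex. -/
noncomputable def ndeg {V : Type*} (G : SimpleGraph V) (v : V) : ℕ :=
  (G.neighborSet v).ncard

/-- `G` contains no singular copy of `K_{r+1}`. -/
def NoSingularClique {V : Type*} (G : SimpleGraph V) (r : ℕ) : Prop :=
  ∀ s : Finset V, s.card = r + 1 → (∀ u ∈ s, ∀ v ∈ s, u ≠ v → G.Adj u v) →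
    ¬((∀ u ∈ s, ∀ v ∈ s, ndeg G u = ndeg G v) ∨
      (∀ u ∈ s, ∀ v ∈ s, u ≠ v → ndeg G u ≠ ndeg G v))

/-- The complete `r²`-partite graph whose parts are indexed by `Fin r × Fin r`, the parts
with first index `i` having size `l i`. -/
def completeMultipartiteR (r : ℕ) (l : Fin r → ℕ) :
    SimpleGraph (Σ p : Fin r × Fin r, Fin (l p.1)) :=
  SimpleGraph.fromRel fun x y => x.1 ≠ y.1

namespace SimpleGraph.completeMultipartiteGraph

variable {ι : Type*} {V : ι → Type*}

theorem neighborSet_eq_compl_range (v : Σ i, V i) :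
    (completeMultipartiteGraph V).neighborSet v = (range (Sigma.mk v.1))ᶜ := by
  ext ⟨i, x⟩
  simp only [mem_neighborSet, comap_adj, top_adj, mem_compl_iff, mem_range, not_exists]
  constructor
  · rintro hne y ⟨⟩
    exact hne rfl
  · rintro h rfl
    exact h x rfl

theorem ndeg_add_card_part [Finite ι] [∀ i, Finite (V i)] (v : Σ i, V i) :
    ndeg (completeMultipartiteGraph V) v + Nat.card (V v.1) = Nat.card (Σ i, V i) := by
  rw [ndeg, neighborSet_eq_compl_range, add_comm,
    ← Nat.card_range_of_injective sigma_mk_injective, Nat.card_coe_set_eq, ncard_add_ncard_compl]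

theorem ndeg_eq_ndeg_iff [Finite ι] [∀ i, Finite (V i)] (u v : Σ i, V i) :
    ndeg (completeMultipartiteGraph V) u = ndeg (completeMultipartiteGraph V) v ↔
      Nat.card (V u.1) = Nat.card (V v.1) := by
  have hu := ndeg_add_card_part u
  have hv := ndeg_add_card_part v
  omega

theorem injOn_fst_of_isClique {s : Set (Σ i, V i)}
    (hs : (completeMultipartiteGraph V).IsClique s) : InjOn Sigma.fst s := by
  intro u hu v hv h
  by_contra hne
  exact hs hu hv hne h

end SimpleGraph.completeMultipartiteGraph

theorem exists_strictMono_pos_sum_eq {r k : ℕ} (hr : 1 ≤ r) (hk : r * (r + 1) ≤ 2 * k) :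
    ∃ l : Fin r → ℕ, StrictMono l ∧ (∀ i, 0 < l i) ∧ ∑ i, l i = k := by
  have htri : (∑ i : Fin r, (i.val + 1)) * 2 = r * (r + 1) := by
    rw [Fin.sum_univ_eq_sum_range (· + 1), mul_comm r]
    simpa only [Finset.sum_range_succ', add_zero, Nat.add_sub_cancel] using
      Finset.sum_range_id_mul_two (r + 1)
  obtain ⟨m, rfl⟩ : ∃ m, r = m + 1 := ⟨r - 1, by omega⟩
  refine ⟨fun i => i.val + 1 + if i = Fin.last m then k - ∑ i : Fin (m + 1), (i.val + 1) else 0,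
    fun i j hij => ?_, fun i => by positivity, ?_⟩
  · have hi : i ≠ Fin.last m := (hij.trans_le (Fin.le_last j)).ne
    have hij' : i.val < j.val := hij
    simp only [hi, if_false]
    omega
  · rw [Finset.sum_add_distrib, Finset.sum_ite_eq']
    simp only [Finset.mem_univ, if_true]
    omega

theorem completeMultipartiteR_eq (r : ℕ) (l : Fin r → ℕ) :
    completeMultipartiteR r l =
      completeMultipartiteGraph fun p : Fin r × Fin r => Fin (l p.1) := by
  ext x y
  simp only [completeMultipartiteR, fromRel_adj, comap_adj, top_adj, ne_comm, or_self,
    and_iff_right_iff_imp]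
  exact fun hne h => hne (congrArg Sigma.fst h)

theorem noSingularClique_completeMultipartiteR {r : ℕ} {l : Fin r → ℕ} (hl : Injective l) :
    NoSingularClique (completeMultipartiteR r l) r := by
  intro s hcard hclique
  rw [completeMultipartiteR_eq] at hclique ⊢
  have hfst : InjOn Sigma.fst (s : Set _) :=
    completeMultipartiteGraph.injOn_fst_of_isClique fun u hu v hv => hclique u hu v hv
  have hdeg : ∀ u v : Σ p : Fin r × Fin r, Fin (l p.1),
      ndeg (completeMultipartiteGraph _) u = ndeg (completeMultipartiteGraph _) v ↔
        u.1.1 = v.1.1 := by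
    intro u v
    rw [completeMultipartiteGraph.ndeg_eq_ndeg_iff, Nat.card_eq_fintype_card,
      Nat.card_eq_fintype_card, Fintype.card_fin, Fintype.card_fin, hl.eq_iff]
  suffices ∀ f : (Σ p : Fin r × Fin r, Fin (l p.1)) → Fin r, ¬ InjOn f s by
    rintro (hall | hdistinct)
    · exact this (fun v => v.1.2) fun u hu v hv h =>
        hfst hu hv (Prod.ext ((hdeg u v).1 (hall u hu v hv)) h)
    · exact this (fun v => v.1.1) fun u hu v hv h =>
        by_contra fun hne => hdistinct u hu v hv hne ((hdeg u v).2 h)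
  intro f hf
  have := Finset.card_le_card_of_injOn f (t := Finset.univ) (fun _ _ => Finset.mem_univ _) hf
  simp only [hcard, Finset.card_univ, Fintype.card_fin] at this
  omega

/-- If `n = rk ≥ r²(r+1)/2`, there exist distinct positive integers `l_1 < ⋯ < l_r`
summing to `k`, and for any such choice the complete `r²`-partite graph with each size
`l_i` appearing `r` times has no singular copy of `K_{r+1}`. -/
theorem completeMultipartite_noSingularClique (r k n : ℕ) (hr : 1 ≤ r)
    (hn : n = r * k) (hbig : r ^ 2 * (r + 1) ≤ 2 * n) :
    (∃ l : Fin r → ℕ, StrictMono l ∧ (∀ i, 0 < l i) ∧ ∑ i, l i = k) ∧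
    (∀ l : Fin r → ℕ, StrictMono l → (∀ i, 0 < l i) → ∑ i, l i = k →
      NoSingularClique (completeMultipartiteR r l) r) := by
  have hk : r * (r + 1) ≤ 2 * k := by
    refine Nat.le_of_mul_le_mul_left ?_ (by omega : 0 < r)
    calc r * (r * (r + 1)) = r ^ 2 * (r + 1) := by ring
      _ ≤ 2 * n := hbig
      _ = r * (2 * k) := by rw [hn]; ring
  exact ⟨exists_strictMono_pos_sum_eq hr hk,
    fun l hl _ _ => noSingularClique_completeMultipartiteR hl.injective⟩
end

section
/- Let l_1 < l_2 < ... < l_r be distinct positive integers summing to k that maximize the number of edges of the complete r²-partite graph on rk vertices in which each size l_i appears as a part size exactly r times. Then l_r ≤ l_1 + r. -/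
open Function

/-- Auxiliary: extend `l : Fin r → ℕ` to `ℕ`. -/
def Lfun (r : ℕ) (l : Fin r → ℕ) (i : ℕ) : ℕ := if h : i < r then l ⟨i, h⟩ else 0

lemma Lfun_eq {r : ℕ} (l : Fin r → ℕ) {i : ℕ} (h : i < r) : Lfun r l i = l ⟨i, h⟩ :=
  dif_pos h

set_option maxHeartbeats 1000000 in
/-- If distinct positive integers `l_1 < ⋯ < l_r` summing to `k` maximize the number of
edges of the complete `r²`-partite graph on `rk` vertices with each size `l_i` appearing
`r` times (equivalently, minimize `∑ l_i²`), then `l_r ≤ l_1 + r`. -/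
theorem max_edges_part_sizes_close (r k : ℕ) (hr : 1 ≤ r) (l : Fin r → ℕ)
    (hsm : StrictMono l) (hpos : ∀ i, 0 < l i) (hsum : ∑ i, l i = k)
    (hmax : ∀ l' : Fin r → ℕ, StrictMono l' → (∀ i, 0 < l' i) → ∑ i, l' i = k →
      ∑ i, (l i) ^ 2 ≤ ∑ i, (l' i) ^ 2) :
    l ⟨r - 1, by omega⟩ ≤ l ⟨0, by omega⟩ + r := by
  classical
  by_contra h
  push_neg at h
  set L : ℕ → ℕ := Lfun r l with hLdef
  have hLf : ∀ i : Fin r, L i.val = l i := fun i => Lfun_eq l i.isLt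
  have hstrict : ∀ i j : ℕ, i < j → j < r → L i < L j := by
    intro i j hij hj
    have hi : i < r := by omega
    rw [hLdef, Lfun_eq l hi, Lfun_eq l hj]
    exact hsm (show (⟨i, hi⟩ : Fin r) < ⟨j, hj⟩ from hij)
  have hmono : ∀ i j : ℕ, i ≤ j → j < r → L i ≤ L j := by
    intro i j hij hj
    rcases eq_or_lt_of_le hij with rfl | hlt
    · exact le_rfl
    · exact le_of_lt (hstrict i j hlt hj)
  have hh : L 0 + r < L (r - 1) := by
    have e0 : L 0 = l ⟨0, by omega⟩ := Lfun_eq l (by omega)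
    have e1 : L (r - 1) = l ⟨r - 1, by omega⟩ := Lfun_eq l (by omega)
    rw [e0, e1]
    exact h
  -- there is a gap of size ≥ 2
  have hex : ∃ p, p + 1 < r ∧ L p + 2 ≤ L (p + 1) := by
    by_contra hno
    push_neg at hno
    have hstep : ∀ i, i < r → L i ≤ L 0 + i := by
      intro i
      induction i with
      | zero => intro _; omega
      | succ n ih =>
        intro hn
        have h1 := hno n (by omega)
        have h2 := ih (by omega)
        omega
    have := hstep (r - 1) (by omega)
    omega
  have hr2 : 2 ≤ r := by
    rcases hex with ⟨p, hp, _⟩; omega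
  set P : ℕ → Prop := fun p => p + 1 < r ∧ L p + 2 ≤ L (p + 1) with hPdef
  have hexP : ∃ p, P p := hex
  set a := Nat.find hexP with hadef
  have ha : P a := Nat.find_spec hexP
  have haler : a ≤ r - 2 := by have := ha.1; omega
  set b := Nat.findGreatest P (r - 2) with hbdef
  have hb : P b := Nat.findGreatest_spec haler ha
  have hab : a ≤ b := Nat.le_findGreatest haler ha
  have hbr : b + 1 < r := hb.1
  have har : a + 1 < r := ha.1
  -- small gaps below a
  have hbound1 : ∀ i, i ≤ a → L i ≤ L 0 + i := by
    intro i
    induction i with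
    | zero => intro _; omega
    | succ n ih =>
      intro hn
      have hnP : ¬ P n := Nat.find_min hexP (by omega)
      have hstep : L (n + 1) ≤ L n + 1 := by
        by_contra hc
        exact hnP ⟨by omega, by omega⟩
      have := ih (by omega)
      omega
  -- small gaps above b
  have hbound2 : ∀ i, b + 1 ≤ i → i < r → L i ≤ L (b + 1) + (i - (b + 1)) := by
    intro i
    induction i with
    | zero => intro h1 _; omega
    | succ n ih =>
      intro h1 h2
      rcases Nat.lt_or_ge b n with hbn | hbn
      · have hnP : ¬ P n := Nat.findGreatest_is_greatest (n := r - 2) (by omega) (by omega)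
        have hstep : L (n + 1) ≤ L n + 1 := by
          by_contra hc
          exact hnP ⟨by omega, by omega⟩
        have := ih (by omega) (by omega)
        omega
      · have : n + 1 = b + 1 := by omega
        rw [this]
        omega
  have hLa : L a ≤ L 0 + a := hbound1 a le_rfl
  have hLb : L (r - 1) ≤ L (b + 1) + (r - 1 - (b + 1)) :=
    hbound2 (r - 1) (by omega) (by omega)
  have key : L a + 3 ≤ L (b + 1) := by omega
  -- define the modified sequence
  set A : Fin r := ⟨a, by omega⟩ with hAdef
  set B : Fin r := ⟨b + 1, by omega⟩ with hBdef
  have hAv : A.val = a := rfl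
  have hBv : B.val = b + 1 := rfl
  have hAB : A ≠ B := Fin.ne_of_val_ne (by omega)
  have hlAv : l A = L a := (hLf A).symm
  have hlBv : l B = L (b + 1) := (hLf B).symm
  have f1 : l A + 3 ≤ l B := by omega
  have f2 : l A + 2 ≤ L (a + 1) := by have := ha.2; omega
  have f3 : L b + 2 ≤ l B := by have := hb.2; omega
  have hmonoF : ∀ (x : ℕ) (j : Fin r), x ≤ j.val → L x ≤ l j := by
    intro x j hx
    have := hmono x j.val hx j.isLt
    rwa [hLf j] at this
  set l' : Fin r → ℕ :=
    Function.update (Function.update l A (l A + 1)) B (l B - 1) with hl'def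
  have hl'A : l' A = l A + 1 := by
    rw [hl'def, Function.update_of_ne hAB, Function.update_self]
  have hl'B : l' B = l B - 1 := by
    rw [hl'def, Function.update_self]
  have hl'o : ∀ x, x ≠ A → x ≠ B → l' x = l x := by
    intro x h1 h2
    rw [hl'def, Function.update_of_ne h2, Function.update_of_ne h1]
  -- strict monotonicity
  have hsm' : StrictMono l' := by
    intro i j hij
    have hij' : i.val < j.val := hij
    rcases eq_or_ne j A with rfl | hjA
    · have hiA : i ≠ A := ne_of_lt hij
      have hiB : i ≠ B := Fin.ne_of_val_ne (by omega)
      rw [hl'A, hl'o i hiA hiB]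
      have : l i < l A := hsm hij
      omega
    · rcases eq_or_ne j B with rfl | hjB
      · rw [hl'B]
        rcases eq_or_ne i A with rfl | hiA
        · rw [hl'A]; omega
        · have hiB : i ≠ B := ne_of_lt hij
          rw [hl'o i hiA hiB]
          have h5 : l i ≤ L b := by
            have : L i.val ≤ L b := hmono i.val b (by omega) (by omega)
            rwa [hLf i] at this
          omega
      · rw [hl'o j hjA hjB]
        rcases eq_or_ne i A with rfl | hiA
        · rw [hl'A]
          have hj1 : a + 1 ≤ j.val := by
            have : j.val ≠ a := fun hc => hjA (Fin.ext (by omega))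
            omega
          have h4 : L (a + 1) ≤ l j := hmonoF (a + 1) j hj1
          omega
        · rcases eq_or_ne i B with rfl | hiB
          · rw [hl'B]
            have := hsm hij
            omega
          · rw [hl'o i hiA hiB]
            exact hsm hij
  -- positivity
  have hpos' : ∀ i, 0 < l' i := by
    intro i
    rcases eq_or_ne i A with rfl | hiA
    · rw [hl'A]; omega
    · rcases eq_or_ne i B with rfl | hiB
      · rw [hl'B]
        have := hpos A
        omega
      · rw [hl'o i hiA hiB]; exact hpos i
  -- sum decomposition
  have hdecomp : ∀ g : Fin r → ℕ,
      ∑ i, g i = g A + g B + ∑ i ∈ ({A, B} : Finset (Fin r))ᶜ, g i := by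
    intro g
    rw [← Finset.sum_add_sum_compl {A, B} g, Finset.sum_pair hAB]
  have hcompl : ∀ (f g : Fin r → ℕ), (∀ i, i ≠ A → i ≠ B → f i = g i) →
      ∑ i ∈ ({A, B} : Finset (Fin r))ᶜ, f i =
      ∑ i ∈ ({A, B} : Finset (Fin r))ᶜ, g i := by
    intro f g hfg
    refine Finset.sum_congr rfl ?_
    intro x hx
    simp only [Finset.mem_compl, Finset.mem_insert, Finset.mem_singleton, not_or] at hx
    exact hfg x hx.1 hx.2
  have hsum' : ∑ i, l' i = k := by
    have h1 := hdecomp l'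
    have h2 := hdecomp l
    have h3 := hcompl l' l (fun i hA hB => hl'o i hA hB)
    rw [hl'A, hl'B] at h1
    omega
  have hsq : ∑ i, (l' i) ^ 2 < ∑ i, (l i) ^ 2 := by
    have h1 := hdecomp fun i => (l' i) ^ 2
    have h2 := hdecomp fun i => (l i) ^ 2
    have h3 := hcompl (fun i => (l' i) ^ 2) (fun i => (l i) ^ 2)
      (fun i hA hB => by simp only [hl'o i hA hB])
    rw [hl'A, hl'B] at h1
    have hkey : (l A + 1) ^ 2 + (l B - 1) ^ 2 < (l A) ^ 2 + (l B) ^ 2 := by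
      obtain ⟨t, ht⟩ : ∃ t, l B = l A + 3 + t := ⟨l B - (l A + 3), by omega⟩
      rw [ht]
      have e : l A + 3 + t - 1 = l A + 2 + t := by omega
      rw [e]
      have hid : (l A + 1) ^ 2 + (l A + 2 + t) ^ 2 + (2 * t + 4)
          = (l A) ^ 2 + (l A + 3 + t) ^ 2 := by ring
      omega
    omega
  have := hmax l' hsm' hpos' hsum'
  omega
end

section
/- If a graph G on n vertices admits a K_{r+1}-WORM coloring, then G has at most ex(n, K_{r²+1}) edges; conversely the balanced complete r²-partite Turán graph on n vertices admits a K_{r+1}-WORM coloring, so wex(n, K_{r+1}) = ex(n, K_{r²+1}). -/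
/-!
Among the `r² + 1` vertices of a clique, either at least `r + 1` colours occur, giving a rainbow
`K_{r+1}`, or at most `r` colours occur and by pigeonhole one of them occurs `r + 1` times, giving
a monochromatic `K_{r+1}`. Hence a WORM-colourable graph is `K_{r²+1}`-free. Conversely, colouring
the Turán graph `T(n, r²)` by `v % r` uses only `r` colours, and each colour class meets only `r`
of its parts.
-/

open SimpleGraph Set Function

theorem Fintype.exists_embedding_injective_comp_or_const {ι α : Type*} [Fintype ι] (h : ι → α)
    {a b : ℕ} (hcard : a * b < Fintype.card ι) :
    (∃ g : Fin (a + 1) ↪ ι, Injective (h ∘ g)) ∨ ∃ g : Fin (b + 1) ↪ ι, ∀ i j, h (g i) = h (g j) := by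
  classical
  by_cases hrange : a + 1 ≤ Fintype.card (range h)
  · obtain ⟨e⟩ := Function.Embedding.nonempty_of_card_le (α := Fin (a + 1)) (β := range h)
      (by rwa [Fintype.card_fin])
    refine .inl ⟨e.trans ⟨rangeSplitting h, rangeSplitting_injective h⟩, ?_⟩
    have hcomp : h ∘ (e.trans ⟨rangeSplitting h, rangeSplitting_injective h⟩) = Subtype.val ∘ e :=
      funext fun i => apply_rangeSplitting h (e i)
    rw [hcomp]
    exact Subtype.val_injective.comp e.injective
  · obtain ⟨y, hy⟩ := Fintype.exists_lt_card_fiber_of_mul_lt_card (rangeFactorization h)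
      (n := b) (lt_of_le_of_lt (Nat.mul_le_mul_right b (by omega)) hcard)
    obtain ⟨e⟩ := Function.Embedding.nonempty_of_card_le (α := Fin (b + 1))
      (β := ({x | rangeFactorization h x = y} : Finset ι))
      (by rwa [Fintype.card_fin, Fintype.card_coe])
    have hfiber : ∀ i, h (e i) = y := fun i =>
      congrArg Subtype.val (Finset.mem_filter.1 (e i).2).2
    exact .inr ⟨e.trans (Embedding.subtype _), fun i j => (hfiber i).trans (hfiber j).symm⟩

namespace SimpleGraph

variable {V : Type*} {G : SimpleGraph V} {k : ℕ}

theorem exists_copy_top_iff (P : (Fin k → V) → Prop) :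
    (∃ f : Copy (completeGraph (Fin k)) G, P f) ↔
      ∃ f : Fin k → V, Injective f ∧ (∀ a b, a ≠ b → G.Adj (f a) (f b)) ∧ P f :=
  ⟨fun ⟨f, hf⟩ => ⟨f, f.injective, fun _ _ hab => f.toHom.map_adj hab, hf⟩,
    fun ⟨f, hf, hadj, hP⟩ => ⟨⟨⟨f, fun hab => hadj _ _ hab⟩, hf⟩, hP⟩⟩

theorem cliqueFree_iff_not_exists_injective_adj :
    G.CliqueFree k ↔ ¬∃ f : Fin k → V, Injective f ∧ ∀ a b, a ≠ b → G.Adj (f a) (f b) := by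
  simpa [cliqueFree_iff, isEmpty_iff] using (exists_copy_top_iff (G := G) fun _ => True).not

theorem Copy.exists_injective_or_const {α : Type*} (c : V → α) {a b : ℕ} (hk : a * b < k)
    (f : Copy (completeGraph (Fin k)) G) :
    (∃ g : Copy (completeGraph (Fin (a + 1))) G, Injective (c ∘ g)) ∨
      ∃ g : Copy (completeGraph (Fin (b + 1))) G, ∀ i j, c (g i) = c (g j) := by
  rcases Fintype.exists_embedding_injective_comp_or_const (c ∘ f) (by simpa using hk)
    with ⟨e, he⟩ | ⟨e, he⟩
  · exact .inl ⟨f.comp (Embedding.completeGraph e).toCopy, he⟩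
  · exact .inr ⟨f.comp (Embedding.completeGraph e).toCopy, he⟩

theorem isGreatest_ncard_edgeSet_turanGraph {n r : ℕ} (hr : 0 < r) :
    IsGreatest {m | ∃ G : SimpleGraph (Fin n), G.CliqueFree (r + 1) ∧ m = G.edgeSet.ncard}
      (turanGraph n r).edgeSet.ncard := by
  refine ⟨⟨_, turanGraph_cliqueFree hr, rfl⟩, ?_⟩
  rintro m ⟨G, hG, rfl⟩
  classical
  simpa only [← ncard_coe_finset, coe_edgeFinset] using (isTuranMaximal_turanGraph hr).2 hG

theorem card_le_of_copy_turanGraph_of_mod_eq {n m a : ℕ} (hm : 0 < m) (ham : a ∣ m)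
    (f : Copy (completeGraph (Fin k)) (turanGraph n m)) (hf : ∀ i j, (f i : ℕ) % a = f j % a) :
    k ≤ m / a := by
  let part : Fin k → Fin (m / a) := fun i =>
    ⟨(f i : ℕ) % m / a, Nat.div_lt_div_of_lt_of_dvd ham (Nat.mod_lt _ hm)⟩
  -- within one residue class mod `a`, the part `v % m` is determined by `v % m / a`
  have hpart : Injective part := by
    intro i j hij
    by_contra hne
    refine turanGraph_adj.1 (f.toHom.map_adj hne) (?_ : (f i : ℕ) % m = f j % m)
    rw [← Nat.div_add_mod ((f i : ℕ) % m) a, ← Nat.div_add_mod ((f j : ℕ) % m) a,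
      Nat.mod_mod_of_dvd _ ham, Nat.mod_mod_of_dvd _ ham, hf i j]
    exact congrArg (a * · + _) (congrArg Fin.val hij)
  simpa using Fintype.card_le_of_injective part hpart

end SimpleGraph

/-- `wex(n, K_{r+1}) = ex(n, K_{r²+1})`: the maximum number of edges of an `n`-vertex
graph admitting a `K_{r+1}`-WORM coloring (no monochromatic and no rainbow `K_{r+1}`)
equals the Turán number of `K_{r²+1}`. -/
theorem worm_clique_eq_ex (r n : ℕ) (hr : 1 ≤ r) (exK : ℕ)
    (hex : IsGreatest {m : ℕ | ∃ G : SimpleGraph (Fin n),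
      (¬∃ f : Fin (r ^ 2 + 1) → Fin n, Injective f ∧ ∀ a b, a ≠ b → G.Adj (f a) (f b)) ∧
      m = G.edgeSet.ncard} exK) :
    IsGreatest {m : ℕ | ∃ (G : SimpleGraph (Fin n)) (c : Fin n → ℕ),
      (¬∃ f : Fin (r + 1) → Fin n, Injective f ∧
        (∀ a b, a ≠ b → G.Adj (f a) (f b)) ∧ ∀ a b, c (f a) = c (f b)) ∧
      (¬∃ f : Fin (r + 1) → Fin n, Injective f ∧
        (∀ a b, a ≠ b → G.Adj (f a) (f b)) ∧ Injective (c ∘ f)) ∧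
      m = G.edgeSet.ncard} exK := by
  have hr2 : 0 < r ^ 2 := by positivity
  have hT : (turanGraph n (r ^ 2)).edgeSet.ncard = exK :=
    (isGreatest_ncard_edgeSet_turanGraph hr2).unique
      (by simpa only [cliqueFree_iff_not_exists_injective_adj] using hex)
  refine ⟨⟨turanGraph n (r ^ 2), fun v => v % r, ?_, ?_, hT.symm⟩, ?_⟩
  · rw [← exists_copy_top_iff]
    rintro ⟨f, hf⟩
    have := card_le_of_copy_turanGraph_of_mod_eq hr2 (dvd_pow_self r two_ne_zero) f hf
    rw [sq, Nat.mul_div_cancel _ hr] at this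
    omega
  · rintro ⟨f, -, -, hf⟩
    have := Fintype.card_le_of_injective (fun i => (⟨f i % r, Nat.mod_lt _ hr⟩ : Fin r))
      fun i j hij => hf (congrArg Fin.val hij)
    simp at this
  · rintro m ⟨G, c, hmono, hrain, rfl⟩
    refine hex.2 ⟨G, ?_, rfl⟩
    rw [← cliqueFree_iff_not_exists_injective_adj, cliqueFree_iff]
    refine ⟨fun f => ?_⟩
    rcases f.exists_injective_or_const c (a := r) (b := r) (by rw [sq]; omega)
      with ⟨g, hg⟩ | ⟨g, hg⟩
    · exact hrain ((exists_copy_top_iff _).1 ⟨g, hg⟩)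
    · exact hmono ((exists_copy_top_iff _).1 ⟨g, hg⟩)
end

section
/- For any non-bipartite graph F with odd girth g, rex(n, F) ≥ n²/(g+6) - O(n): there is a constant C = C(g) such that for every n there exists an F-free regular graph on n vertices with at least n²/(g+6) - C·n edges. -/
/-!
A closed walk in the cycle `C_m` (here `circulantGraph {1}` on `ZMod m`) with `p₁` forward and
`p₂` backward steps has `p₁ ≡ p₂ (mod m)`, so it has even length or length at least `m`. Hence
a graph with a homomorphism to `C_{g+2}` contains no homomorphic image of the odd `g`-cycle of `F`.
Writing `n = 2a + (g+2)q` with `2q ≤ a` and `q ≈ n/(g+6)`, the disjoint union of a `2q`-regular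
bipartite graph on `2a` vertices and the blow-up of `C_{g+2}` by independent `q`-sets is
`2q`-regular on `n` vertices, maps to `C_{g+2}`, and has `nq ≥ n²/(g+6) - 2n` edges.
-/

open SimpleGraph Set Function

theorem Nat.exists_eq_two_mul_add_mul {m n : ℕ} (hm : Odd m) (hn : 2 * (m + 4) ≤ n) :
    ∃ a q, n = 2 * a + m * q ∧ 2 * q ≤ a ∧ 0 < q ∧ n ≤ (m + 4) * (q + 2) := by
  set D := n / (m + 4)
  have hD : (m + 4) * D ≤ n ∧ n < (m + 4) * (D + 1) :=
    ⟨Nat.mul_div_le n _, Nat.lt_mul_div_succ n (by omega)⟩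
  have hD2 : 2 ≤ D := (Nat.le_div_iff_mul_le (by omega)).2 (by linarith)
  -- `m * q ≡ q` mod 2, so `n - m * q` is even exactly when `q ≡ n`
  obtain ⟨q, hqD, hDq, hpar⟩ : ∃ q, q ≤ D ∧ D ≤ q + 1 ∧ q % 2 = n % 2 := by
    by_cases h : D % 2 = n % 2
    · exact ⟨D, le_rfl, by omega, h⟩
    · exact ⟨D - 1, by omega, by omega, by omega⟩
  obtain ⟨k, rfl⟩ := hm
  have hlo : (2 * k + 1 + 4) * q ≤ (2 * k + 1 + 4) * D := Nat.mul_le_mul_left _ hqD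
  have hhi : (2 * k + 1 + 4) * (D + 1) ≤ (2 * k + 1 + 4) * (q + 2) :=
    Nat.mul_le_mul_left _ (by omega)
  have hexp : (2 * k + 1 + 4) * q = 2 * (k * q) + q + 4 * q := by ring
  have hexp' : (2 * k + 1) * q = 2 * (k * q) + q := by ring
  refine ⟨(n - (2 * k + 1) * q) / 2, q, ?_, ?_, by omega, by omega⟩ <;> omega

theorem ZMod.ncard_range_natCast_fin {a k : ℕ} (hk : k ≤ a) :
    (range fun i : Fin k => ((i : ℕ) : ZMod a)).ncard = k := by
  rw [ncard_range_of_injective, Nat.card_eq_fintype_card, Fintype.card_fin]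
  intro i j h
  have := congrArg ZMod.val h
  rw [ZMod.val_natCast_of_lt (by omega), ZMod.val_natCast_of_lt (by omega)] at this
  exact Fin.ext this

namespace SimpleGraph

variable {V W K : Type*}

section OddWalks

variable {m : ℕ}

theorem circulantGraph_one_adj {u v : ZMod m} :
    (circulantGraph ({1} : Set (ZMod m))).Adj u v ↔ u ≠ v ∧ (u - v = 1 ∨ v - u = 1) := by
  simp

theorem Walk.exists_add_eq_add_of_circulantGraph_one {u v : ZMod m}
    (w : (circulantGraph ({1} : Set (ZMod m))).Walk u v) :
    ∃ p₁ p₂ : ℕ, p₁ + p₂ = w.length ∧ u + p₁ = v + p₂ := by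
  induction w with
  | nil => exact ⟨0, 0, rfl, rfl⟩
  | @cons u x v hadj w ih =>
    obtain ⟨p₁, p₂, hlen, hsum⟩ := ih
    rw [Walk.length_cons, ← hlen]
    rcases (circulantGraph_one_adj.1 hadj).2 with hstep | hstep
    · exact ⟨p₁, p₂ + 1, by omega, by push_cast; linear_combination hsum + hstep⟩
    · exact ⟨p₁ + 1, p₂, by omega, by push_cast; linear_combination hsum - hstep⟩

theorem Walk.le_length_of_odd_of_circulantGraph_one {u : ZMod m}
    (w : (circulantGraph ({1} : Set (ZMod m))).Walk u u) (hodd : Odd w.length) :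
    m ≤ w.length := by
  obtain ⟨p₁, p₂, hlen, hsum⟩ := w.exists_add_eq_add_of_circulantGraph_one
  by_contra! hlt
  have hmod : p₁ ≡ p₂ [MOD m] := (ZMod.natCast_eq_natCast_iff _ _ _).1 (add_left_cancel hsum)
  have : p₁ = p₂ := hmod.eq_of_lt_of_lt (by omega) (by omega)
  rw [← hlen, this, ← two_mul] at hodd
  exact Nat.not_odd_iff_even.2 (even_two_mul p₂) hodd

theorem Hom.le_length_of_odd {G : SimpleGraph V}
    (φ : G →g circulantGraph ({1} : Set (ZMod m))) {v : V} (w : G.Walk v v)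
    (hodd : Odd w.length) : m ≤ w.length := by
  rw [← w.length_map φ] at hodd ⊢
  exact (w.map φ).le_length_of_odd_of_circulantGraph_one hodd

end OddWalks

section Regular

theorem Iso.ncard_neighborSet {G : SimpleGraph V} {H : SimpleGraph W} (f : G ≃g H) (v : V) :
    (H.neighborSet (f v)).ncard = (G.neighborSet v).ncard := by
  rw [← f.image_neighborSet, ncard_image_of_injective _ f.injective]

theorem two_mul_ncard_edgeSet_of_ncard_neighborSet [Fintype V] {G : SimpleGraph V} {d : ℕ}
    (hreg : ∀ v, (G.neighborSet v).ncard = d) : 2 * G.edgeSet.ncard = Fintype.card V * d := by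
  classical
  have hdeg : ∀ v, G.degree v = d := fun v => by
    rw [← hreg v, ← card_neighborSet_eq_degree, ← Nat.card_coe_set_eq, Nat.card_eq_fintype_card]
  have hsum := G.sum_degrees_eq_twice_card_edges
  simp only [hdeg, Finset.sum_const, Finset.card_univ, smul_eq_mul] at hsum
  rw [← coe_edgeFinset, ncard_coe_finset, ← hsum]

theorem ncard_neighborSet_sum_inl (G : SimpleGraph V) (H : SimpleGraph W) (v : V) :
    ((G ⊕g H).neighborSet (.inl v)).ncard = (G.neighborSet v).ncard := by
  rw [neighborSet_sum_inl, ncard_image_of_injective _ Sum.inl_injective]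

theorem ncard_neighborSet_sum_inr (G : SimpleGraph V) (H : SimpleGraph W) (w : W) :
    ((G ⊕g H).neighborSet (.inr w)).ncard = (H.neighborSet w).ncard := by
  rw [neighborSet_sum_inr, ncard_image_of_injective _ Sum.inr_injective]

theorem ncard_neighborSet_comap_fst (G : SimpleGraph V) (v : V) (w : W) :
    ((G.comap (Prod.fst : V × W → V)).neighborSet (v, w)).ncard =
      (G.neighborSet v).ncard * Nat.card W := by
  rw [neighborSet_comap, ← Set.prod_univ, ncard_prod, ncard_univ]

theorem ncard_neighborSet_circulantGraph_one {m : ℕ} (hm : 3 ≤ m) (u : ZMod m) :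
    ((circulantGraph ({1} : Set (ZMod m))).neighborSet u).ncard = 2 := by
  have htwo : (2 : ZMod m) ≠ 0 := by
    rw [← Nat.cast_ofNat, Ne, ZMod.natCast_eq_zero_iff]
    exact fun h => by have := Nat.le_of_dvd two_pos h; omega
  have hne : u + 1 ≠ u - 1 := fun h => htwo (by linear_combination h)
  have hnbr : (circulantGraph ({1} : Set (ZMod m))).neighborSet u = {u + 1, u - 1} := by
    ext v
    simp only [mem_neighborSet, circulantGraph_one_adj, mem_insert_iff, mem_singleton_iff]
    constructor
    · rintro ⟨-, h | h⟩
      · right; linear_combination -h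
      · left; linear_combination h
    · have hone : (1 : ZMod m) ≠ 0 := by
        have : Fact (1 < m) := ⟨by omega⟩
        exact one_ne_zero
      rintro (rfl | rfl)
      · exact ⟨fun h => hone (by linear_combination -h), Or.inr (by ring)⟩
      · exact ⟨fun h => hone (by linear_combination h), Or.inl (by ring)⟩
  rw [hnbr, ncard_pair hne]

end Regular

def Hom.sumElim {G : SimpleGraph V} {H : SimpleGraph W} {I : SimpleGraph K}
    (f : G →g I) (g : H →g I) : G ⊕g H →g I where
  toFun := Sum.elim f g
  map_rel' {u v} h := by
    cases u <;> cases v <;> simp_all [f.map_adj, g.map_adj]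

section Bipartite

variable {A : Type*} [AddGroup A]

def bipartiteCirculant (T : Set A) : SimpleGraph (A ⊕ A) where
  Adj
    | .inl x, .inr y | .inr y, .inl x => y - x ∈ T
    | _, _ => False
  symm := ⟨by rintro (x | x) (y | y) h <;> exact h⟩
  loopless := ⟨by rintro (x | x) h <;> exact h⟩

variable (T : Set A)

theorem ncard_neighborSet_bipartiteCirculant (v : A ⊕ A) :
    ((bipartiteCirculant T).neighborSet v).ncard = T.ncard := by
  cases v with
  | inl x =>
    have : (bipartiteCirculant T).neighborSet (.inl x) = .inr '' ((· - x) ⁻¹' T) := by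
      ext (y | y) <;> simp [bipartiteCirculant]
    rw [this, ncard_image_of_injective _ Sum.inr_injective,
      ncard_preimage_of_injective_subset_range sub_left_injective
        (fun t _ => ⟨t + x, add_sub_cancel_right t x⟩)]
  | inr y =>
    have : (bipartiteCirculant T).neighborSet (.inr y) = .inl '' ((y - ·) ⁻¹' T) := by
      ext (x | x) <;> simp [bipartiteCirculant]
    rw [this, ncard_image_of_injective _ Sum.inl_injective,
      ncard_preimage_of_injective_subset_range sub_right_injective
        (fun t _ => ⟨-t + y, by simp⟩)]

def bipartiteCirculant.homCirculantGraphOne {m : ℕ} (hm : 2 ≤ m) :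
    bipartiteCirculant T →g circulantGraph ({1} : Set (ZMod m)) where
  toFun := Sum.elim 0 1
  map_rel' {u v} h := by
    have hone : (1 : ZMod m) ≠ 0 := by
      have : Fact (1 < m) := ⟨by omega⟩
      exact one_ne_zero
    cases u <;> cases v <;> simp_all [bipartiteCirculant, eq_comm]

end Bipartite

/-- The paper's `K_{2q+r,2q+r}` minus `r` perfect matchings is realised as a bipartite circulant
with `2q` consecutive jumps; the second summand is the blow-up of `C_m` by independent `q`-sets. -/
def regularOddGirthGraph (m a q : ℕ) : SimpleGraph ((ZMod a ⊕ ZMod a) ⊕ (ZMod m × Fin q)) :=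
  bipartiteCirculant (range fun i : Fin (2 * q) => ((i : ℕ) : ZMod a)) ⊕g
    (circulantGraph ({1} : Set (ZMod m))).comap Prod.fst

theorem ncard_neighborSet_regularOddGirthGraph {m a q : ℕ} (hm : 3 ≤ m) (hq : 2 * q ≤ a)
    (v : (ZMod a ⊕ ZMod a) ⊕ (ZMod m × Fin q)) :
    ((regularOddGirthGraph m a q).neighborSet v).ncard = 2 * q := by
  rcases v with v | ⟨i, s⟩
  · rw [regularOddGirthGraph, ncard_neighborSet_sum_inl, ncard_neighborSet_bipartiteCirculant,
      ZMod.ncard_range_natCast_fin hq]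
  · rw [regularOddGirthGraph, ncard_neighborSet_sum_inr, ncard_neighborSet_comap_fst,
      ncard_neighborSet_circulantGraph_one hm, Nat.card_eq_fintype_card, Fintype.card_fin]

def regularOddGirthGraph.homCirculantGraphOne {m a q : ℕ} (hm : 2 ≤ m) :
    regularOddGirthGraph m a q →g circulantGraph ({1} : Set (ZMod m)) :=
  (bipartiteCirculant.homCirculantGraphOne _ hm).sumElim (Hom.comap _ _)

theorem exists_regular_hom_circulantGraph_one {m : ℕ} (hm : Odd m) (hm3 : 3 ≤ m) (n : ℕ) :
    ∃ (G : SimpleGraph (Fin n)) (q : ℕ), (∀ v, (G.neighborSet v).ncard = 2 * q) ∧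
      Nonempty (G →g circulantGraph ({1} : Set (ZMod m))) ∧ n ≤ (m + 4) * (q + 2) := by
  by_cases hn : n < 2 * (m + 4)
  · refine ⟨⊥, 0, fun v => by simp, ⟨⟨fun _ => 0, fun h => h.elim⟩⟩, by omega⟩
  obtain ⟨a, q, rfl, hqa, hq, hbound⟩ := Nat.exists_eq_two_mul_add_mul hm (not_lt.1 hn)
  have : NeZero a := ⟨by omega⟩
  have : NeZero m := ⟨by omega⟩
  have hcard : Fintype.card ((ZMod a ⊕ ZMod a) ⊕ (ZMod m × Fin q)) = 2 * a + m * q := by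
    simp only [Fintype.card_sum, Fintype.card_prod, ZMod.card, Fintype.card_fin]
    ring
  let e := (regularOddGirthGraph m a q).overFinIso hcard
  refine ⟨_, q, fun v => ?_, ⟨(regularOddGirthGraph.homCirculantGraphOne (by omega)).comp
    e.symm.toHom⟩, hbound⟩
  rw [← e.apply_symm_apply v, e.ncard_neighborSet, ncard_neighborSet_regularOddGirthGraph hm3 hqa]

end SimpleGraph

theorem rex_lower_bound_odd_girth_general {W : Type*} (F : SimpleGraph W) (g : ℕ) (hodd : Odd g)
    (hgirth : ∃ (v : W) (w : F.Walk v v), w.IsCycle ∧ w.length = g) :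
    ∃ C : ℝ, ∀ n : ℕ, ∃ G : SimpleGraph (Fin n),
      (∃ d : ℕ, ∀ v, (G.neighborSet v).ncard = d) ∧
      (¬∃ f : W → Fin n, Injective f ∧ ∀ a b, F.Adj a b → G.Adj (f a) (f b)) ∧
      (n : ℝ) ^ 2 / (g + 6) - C * n ≤ G.edgeSet.ncard := by
  obtain ⟨v, w, -, hlen⟩ := hgirth
  refine ⟨2, fun n => ?_⟩
  obtain ⟨G, q, hreg, ⟨φ⟩, hbound⟩ :=
    exists_regular_hom_circulantGraph_one (m := g + 2) (hodd.add_even even_two)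
      (by have := hodd.pos; omega) n
  refine ⟨G, ⟨_, hreg⟩, ?_, ?_⟩
  · rintro ⟨f, -, hf⟩
    have := (φ.comp ⟨f, hf _ _⟩).le_length_of_odd w (hlen ▸ hodd)
    omega
  · have hedges : G.edgeSet.ncard = n * q := by
      have := two_mul_ncard_edgeSet_of_ncard_neighborSet hreg
      rw [Fintype.card_fin] at this
      linarith
    have hbound' : (n : ℝ) ≤ (g + 6) * (q + 2) := by
      exact_mod_cast (by omega : n ≤ (g + 6) * (q + 2))
    rw [hedges, Nat.cast_mul, sub_le_iff_le_add, div_le_iff₀ (by positivity)]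
    nlinarith [n.cast_nonneg (α := ℝ)]

/-- `rex(n, F) ≥ n²/(g+6) - O(n)` for a non-bipartite graph `F` of odd girth `g`: there
is a constant `C` such that for every `n` there is an `F`-free regular graph on `n`
vertices with at least `n²/(g+6) - C·n` edges. -/
theorem rex_lower_bound_odd_girth {W : Type*} (F : SimpleGraph W) (g : ℕ) (hodd : Odd g)
    (hgirth : ∃ (v : W) (w : F.Walk v v), w.IsCycle ∧ w.length = g)
    (hmin : ∀ (v : W) (w : F.Walk v v), w.IsCycle → Odd w.length → g ≤ w.length) :
    ∃ C : ℝ, ∀ n : ℕ, ∃ G : SimpleGraph (Fin n),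
      (∃ d : ℕ, ∀ v, (G.neighborSet v).ncard = d) ∧
      (¬∃ f : W → Fin n, Injective f ∧ ∀ a b, F.Adj a b → G.Adj (f a) (f b)) ∧
      (n : ℝ) ^ 2 / (g + 6) - C * n ≤ G.edgeSet.ncard :=
  rex_lower_bound_odd_girth_general F g hodd hgirth
end
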